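/- Let B be the (n)×(n) block matrix with upper-left m×m block h, entries B_{m+1,i} = f_i for i ≤ m, B_{i,m+j} = 0 for i ≤ m and j < n−m, B_{i,n} = g_i for i ≤ m, lower-right block a companion matrix with subdiagonal 1's and last column (e_1,…,e_{n−m})ᵀ, and all other entries zero. Then det(η·1 − B) = det(η·1 − h)·(η^{n−m} − e_{n−m} η^{n−m−1} − ⋯ − e_1) − f · adj(η·1 − h) · g, where f = (f_1,…,f_m) is a row vector, g = (g_1,…,g_m)ᵀ a column vector, and adj denotes the classical adjugate matrix. -/
import Mathlib

open Matrix

lemma compDet : ∀ (k : ℕ) (e : Fin k → ℂ) (η : ℂ),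
    (Matrix.of fun r s : Fin k =>
      (if r = s then η else 0) -
        (if (s : ℕ) = k - 1 then e r else if (r : ℕ) = (s : ℕ) + 1 then (1:ℂ) else 0)).det
      = η ^ k - ∑ j : Fin k, e j * η ^ (j : ℕ)
  | 0, e, η => by simp
  | 1, e, η => by
      simp [Matrix.det_fin_one, Fin.sum_univ_one]
  | (k+2), e, η => by
      set M : Matrix (Fin (k+2)) (Fin (k+2)) ℂ := Matrix.of fun r s =>
        (if r = s then η else 0) -
          (if (s : ℕ) = (k+2) - 1 then e r else if (r : ℕ) = (s : ℕ) + 1 then (1:ℂ) else 0) with hM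
      have h0 : ∀ s : Fin (k+2), M 0 s =
          (if s = 0 then η else 0) - (if s = Fin.last (k+1) then e 0 else 0) := by
        intro s
        rw [hM]
        simp only [Matrix.of_apply]
        congr 1
        · simp [eq_comm]
        · rcases eq_or_ne s (Fin.last (k+1)) with rfl | hs
          · simp
          · have : (s:ℕ) ≠ k + 1 := fun hc => hs (Fin.ext hc)
            simp [this, hs]
      rw [Matrix.det_succ_row_zero]
      have key : ∀ s : Fin (k+2), (-1:ℂ) ^ (s:ℕ) * M 0 s * det (M.submatrix Fin.succ s.succAbove)
          = (if s = 0 then η * det (M.submatrix Fin.succ s.succAbove) else 0)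
            - (if s = Fin.last (k+1) then (-1:ℂ)^(s:ℕ) * e 0 * det (M.submatrix Fin.succ s.succAbove) else 0) := by
        intro s
        rw [h0 s]
        by_cases hs0 : s = 0 <;> by_cases hsl : s = Fin.last (k+1) <;>
          simp_all <;> ring
      rw [Finset.sum_congr rfl (fun s _ => key s), Finset.sum_sub_distrib,
        Finset.sum_ite_eq' Finset.univ (0 : Fin (k+2)),
        Finset.sum_ite_eq' Finset.univ (Fin.last (k+1))]
      simp only [Finset.mem_univ, if_true]
      -- minor at 0
      have m0 : M.submatrix Fin.succ ((0 : Fin (k+2)).succAbove) =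
          Matrix.of fun r s : Fin (k+1) =>
            (if r = s then η else 0) -
              (if (s : ℕ) = (k+1) - 1 then (e ∘ Fin.succ) r
               else if (r : ℕ) = (s : ℕ) + 1 then (1:ℂ) else 0) := by
        ext r s
        simp only [Matrix.submatrix_apply, Fin.succAbove_zero, hM, Matrix.of_apply,
          Function.comp_apply]
        congr 1
        · simp [Fin.succ_inj]
        · have h1 : ((s.succ : Fin (k+2)) : ℕ) = (s:ℕ)+1 := rfl
          have h2 : ((r.succ : Fin (k+2)) : ℕ) = (r:ℕ)+1 := rfl
          rw [h1, h2]
          have c1 : ((s:ℕ) + 1 = k + 2 - 1) ↔ ((s:ℕ) = k + 1 - 1) := by omega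
          have c2 : ((r:ℕ) + 1 = (s:ℕ) + 1 + 1) ↔ ((r:ℕ) = (s:ℕ) + 1) := by omega
          simp only [c1, c2]
      -- minor at last: upper triangular with diagonal -1
      have ml : det (M.submatrix Fin.succ ((Fin.last (k+1)).succAbove)) = (-1:ℂ)^(k+1) := by
        have tri : ∀ (i j : Fin (k+1)), j < i →
            M.submatrix Fin.succ ((Fin.last (k+1)).succAbove) i j = 0 := by
          intro i j hij
          simp only [Matrix.submatrix_apply, Fin.succAbove_last, hM, Matrix.of_apply]
          have h1 : ((i.succ : Fin (k+2)) : ℕ) = (i:ℕ)+1 := rfl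
          have h2 : ((j.castSucc : Fin (k+2)) : ℕ) = (j:ℕ) := rfl
          have hne : i.succ ≠ j.castSucc := by
            intro hc
            have := congrArg (Fin.val) hc
            rw [h1, h2] at this
            omega
          have hj : (j:ℕ) < k + 1 := j.isLt
          have hlt : (j:ℕ) < (i:ℕ) := hij
          rw [if_neg hne, h1, h2, if_neg (by omega), if_neg (by omega)]
          ring
        rw [Matrix.det_of_upperTriangular tri]
        have diag : ∀ i : Fin (k+1),
            M.submatrix Fin.succ ((Fin.last (k+1)).succAbove) i i = -1 := by
          intro i
          simp only [Matrix.submatrix_apply, Fin.succAbove_last, hM, Matrix.of_apply]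
          have h1 : ((i.succ : Fin (k+2)) : ℕ) = (i:ℕ)+1 := rfl
          have h2 : ((i.castSucc : Fin (k+2)) : ℕ) = (i:ℕ):= rfl
          have hne : i.succ ≠ i.castSucc := by
            intro hc
            have := congrArg (Fin.val) hc
            rw [h1, h2] at this
            omega
          have hi : (i:ℕ) < k + 1 := i.isLt
          rw [if_neg hne, h1, h2, if_neg (by omega), if_pos rfl]
          ring
        rw [Finset.prod_congr rfl fun i _ => diag i, Finset.prod_const]
        simp
      rw [m0, compDet (k+1) (e ∘ Fin.succ) η, ml]
      have hval : ((Fin.last (k+1) : Fin (k+2)) : ℕ) = k + 1 := rfl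
      rw [hval]
      have hsq : ((-1:ℂ)^(k+1)) * ((-1:ℂ)^(k+1)) = 1 := by
        rw [← pow_add]; exact Even.neg_one_pow ⟨k+1, by ring⟩
      have hthis : ((-1:ℂ)^(k+1)) * e 0 * ((-1:ℂ)^(k+1)) = e 0 := by
        linear_combination e 0 * hsq
      rw [hthis]
      rw [Fin.sum_univ_succ (f := fun j : Fin (k+2) => e j * η ^ (j:ℕ))]
      simp only [Function.comp_apply, Fin.val_succ, Fin.val_zero, pow_zero, mul_one]
      have hsum : η * ∑ j : Fin (k+1), e j.succ * η ^ (j:ℕ)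
          = ∑ j : Fin (k+1), e j.succ * η ^ ((j:ℕ)+1) := by
        rw [Finset.mul_sum]; exact Finset.sum_congr rfl fun j _ => by ring
      rw [mul_sub, hsum]
      ring
lemma aux_unit (m k : ℕ) (hk : 0 < k)
    (h : Matrix (Fin m) (Fin m) ℂ) (f g : Fin m → ℂ) (e : Fin k → ℂ) (η : ℂ)
    (hu : IsUnit (η • (1 : Matrix (Fin m) (Fin m) ℂ) - h).det) :
      (η • (1 : Matrix (Fin m ⊕ Fin k) (Fin m ⊕ Fin k) ℂ) -
        Matrix.fromBlocks h
          (Matrix.of fun (i : Fin m) (j : Fin k) => if (j : ℕ) = k - 1 then g i else 0)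
          (Matrix.of fun (r : Fin k) (i : Fin m) => if (r : ℕ) = 0 then f i else 0)
          (Matrix.of fun (r s : Fin k) =>
            if (s : ℕ) = k - 1 then e r else if (r : ℕ) = (s : ℕ) + 1 then 1 else 0)).det =
        (η • (1 : Matrix (Fin m) (Fin m) ℂ) - h).det *
            (η ^ k - ∑ j : Fin k, e j * η ^ (j : ℕ)) -
          f ⬝ᵥ ((η • (1 : Matrix (Fin m) (Fin m) ℂ) - h).adjugate *ᵥ g) := by
  classical
  set A : Matrix (Fin m) (Fin m) ℂ := η • 1 - h with hA
  letI : Invertible A := A.invertibleOfIsUnitDet hu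
  letI : Invertible A.det := A.detInvertibleOfInvertible
  set B12 : Matrix (Fin m) (Fin k) ℂ :=
    Matrix.of fun i j => if (j : ℕ) = k - 1 then g i else 0 with hB12
  set B21 : Matrix (Fin k) (Fin m) ℂ :=
    Matrix.of fun r i => if (r : ℕ) = 0 then f i else 0 with hB21
  set c : ℂ := f ⬝ᵥ ((⅟A) *ᵥ g) with hc
  have hsplit : η • (1 : Matrix (Fin m ⊕ Fin k) (Fin m ⊕ Fin k) ℂ) -
      Matrix.fromBlocks h B12 B21
        (Matrix.of fun (r s : Fin k) =>
          if (s : ℕ) = k - 1 then e r else if (r : ℕ) = (s : ℕ) + 1 then (1:ℂ) else 0)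
      = Matrix.fromBlocks A (-B12) (-B21)
          (Matrix.of fun (r s : Fin k) =>
            (if r = s then η else 0) -
              (if (s : ℕ) = k - 1 then e r else if (r : ℕ) = (s : ℕ) + 1 then (1:ℂ) else 0)) := by
    ext (i | i) (j | j) <;>
      simp [Matrix.one_apply, Matrix.smul_apply, hA, Matrix.sub_apply, sub_eq_add_neg]
  rw [hsplit, Matrix.det_fromBlocks₁₁]
  have hmul : (-B21) * ⅟A * (-B12) =
      Matrix.of fun (r s : Fin k) =>
        if (r : ℕ) = 0 then (if (s : ℕ) = k - 1 then c else 0) else 0 := by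
    ext r s
    simp only [Matrix.mul_apply, Matrix.neg_apply, hB21, hB12, Matrix.of_apply]
    by_cases hr : (r : ℕ) = 0 <;> by_cases hs : (s : ℕ) = k - 1 <;>
      simp [hr, hs, hc, dotProduct, Matrix.mulVec, Finset.mul_sum]
    rw [Finset.sum_comm]
    exact Finset.sum_congr rfl fun j _ => by
      rw [Finset.sum_mul]
      exact Finset.sum_congr rfl fun i _ => by ring
  set e' : Fin k → ℂ := fun r => e r + (if (r : ℕ) = 0 then c else 0) with he'
  have hD : (Matrix.of fun (r s : Fin k) =>
        (if r = s then η else 0) -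
          (if (s : ℕ) = k - 1 then e r else if (r : ℕ) = (s : ℕ) + 1 then (1:ℂ) else 0))
        - (-B21) * ⅟A * (-B12)
      = Matrix.of fun (r s : Fin k) =>
        (if r = s then η else 0) -
          (if (s : ℕ) = k - 1 then e' r
           else if (r : ℕ) = (s : ℕ) + 1 then (1:ℂ) else 0) := by
    rw [hmul]
    ext r s
    simp only [Matrix.sub_apply, Matrix.of_apply, he']
    by_cases hr : (r : ℕ) = 0 <;> by_cases hs : (s : ℕ) = k - 1 <;>
      simp [hr, hs] <;> ring
  rw [hD, compDet k e' η]
  have hsum : ∑ j : Fin k, e' j * η ^ (j : ℕ)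
      = (∑ j : Fin k, e j * η ^ (j : ℕ)) + c := by
    simp only [he', add_mul, Finset.sum_add_distrib]
    congr 1
    rw [Finset.sum_eq_single (⟨0, hk⟩ : Fin k)]
    · simp
    · intro j _ hj
      have : (j : ℕ) ≠ 0 := fun hc0 => hj (Fin.ext hc0)
      simp [this]
    · intro habs; exact absurd (Finset.mem_univ _) habs
  rw [hsum]
  have hadj : A.det * c = f ⬝ᵥ (A.adjugate *ᵥ g) := by
    rw [hc, Matrix.invOf_eq, smul_mulVec, dotProduct_smul, smul_eq_mul, ← mul_assoc,
      mul_invOf_self, one_mul]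
  rw [← hadj]
  ring
lemma aux_all (m k : ℕ) (hk : 0 < k)
    (h : Matrix (Fin m) (Fin m) ℂ) (f g : Fin m → ℂ) (e : Fin k → ℂ) (η : ℂ) :
      (η • (1 : Matrix (Fin m ⊕ Fin k) (Fin m ⊕ Fin k) ℂ) -
        Matrix.fromBlocks h
          (Matrix.of fun (i : Fin m) (j : Fin k) => if (j : ℕ) = k - 1 then g i else 0)
          (Matrix.of fun (r : Fin k) (i : Fin m) => if (r : ℕ) = 0 then f i else 0)
          (Matrix.of fun (r s : Fin k) =>
            if (s : ℕ) = k - 1 then e r else if (r : ℕ) = (s : ℕ) + 1 then 1 else 0)).det =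
        (η • (1 : Matrix (Fin m) (Fin m) ℂ) - h).det *
            (η ^ k - ∑ j : Fin k, e j * η ^ (j : ℕ)) -
          f ⬝ᵥ ((η • (1 : Matrix (Fin m) (Fin m) ℂ) - h).adjugate *ᵥ g) := by
  classical
  set Bf : Matrix (Fin m ⊕ Fin k) (Fin m ⊕ Fin k) ℂ :=
    Matrix.fromBlocks h
      (Matrix.of fun (i : Fin m) (j : Fin k) => if (j : ℕ) = k - 1 then g i else 0)
      (Matrix.of fun (r : Fin k) (i : Fin m) => if (r : ℕ) = 0 then f i else 0)
      (Matrix.of fun (r s : Fin k) =>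
        if (s : ℕ) = k - 1 then e r else if (r : ℕ) = (s : ℕ) + 1 then 1 else 0) with hBf
  set F : ℂ → ℂ := fun η =>
    (η • (1 : Matrix (Fin m ⊕ Fin k) (Fin m ⊕ Fin k) ℂ) - Bf).det with hF
  set G : ℂ → ℂ := fun η =>
    (η • (1 : Matrix (Fin m) (Fin m) ℂ) - h).det *
        (η ^ k - ∑ j : Fin k, e j * η ^ (j : ℕ)) -
      f ⬝ᵥ ((η • (1 : Matrix (Fin m) (Fin m) ℂ) - h).adjugate *ᵥ g) with hG
  have hcontA : Continuous fun η : ℂ => η • (1 : Matrix (Fin m) (Fin m) ℂ) - h :=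
    (continuous_id.smul continuous_const).sub continuous_const
  have hcF : Continuous F :=
    ((continuous_id.smul continuous_const).sub continuous_const).matrix_det
  have hcG : Continuous G := by
    apply Continuous.sub
    · exact hcontA.matrix_det.mul ((continuous_pow k).sub
        (continuous_finset_sum _ fun j _ => continuous_const.mul (continuous_pow (j : ℕ))))
    · exact continuous_const.dotProduct
        (hcontA.matrix_adjugate.matrix_mulVec continuous_const)
  have hpoly : ∀ η : ℂ, (η • (1 : Matrix (Fin m) (Fin m) ℂ) - h).det
      = Polynomial.eval η h.charpoly := by
    intro η
    rw [Matrix.charpoly, ← Polynomial.coe_evalRingHom, RingHom.map_det]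
    congr 1
    ext i j
    by_cases hij : i = j <;>
      simp [hij, Matrix.charmatrix_apply_eq, Matrix.charmatrix_apply_ne, Matrix.one_apply]
  have hfin : {η : ℂ | (η • (1 : Matrix (Fin m) (Fin m) ℂ) - h).det = 0}.Finite := by
    apply (Polynomial.finite_setOf_isRoot (h.charpoly_monic).ne_zero).subset
    intro x hx
    simp only [Set.mem_setOf_eq] at hx ⊢
    rw [Polynomial.IsRoot, ← hpoly x]
    exact hx
  have hdense : Dense {η : ℂ | (η • (1 : Matrix (Fin m) (Fin m) ℂ) - h).det = 0}ᶜ :=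
    hfin.countable.dense_compl ℂ
  have heq : F = G := by
    apply hcF.ext_on hdense hcG
    intro x hx
    simp only [Set.mem_compl_iff, Set.mem_setOf_eq] at hx
    exact aux_unit m k hk h f g e x (isUnit_iff_ne_zero.mpr hx)
  exact congrFun heq η

/-- Characteristic polynomial of the block companion matrix B:
det(η·1 − B) = det(η·1 − h)·(η^{n−m} − e_{n−m}η^{n−m−1} − ⋯ − e_1)
               − f·adj(η·1 − h)·g. Here k = n − m > 0. -/
theorem det_block_companion (m k : ℕ) (hk : 0 < k)
    (h : Matrix (Fin m) (Fin m) ℂ) (f g : Fin m → ℂ) (e : Fin k → ℂ) :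
    letI B : Matrix (Fin m ⊕ Fin k) (Fin m ⊕ Fin k) ℂ :=
      Matrix.fromBlocks h
        (Matrix.of fun i j => if (j : ℕ) = k - 1 then g i else 0)
        (Matrix.of fun r i => if (r : ℕ) = 0 then f i else 0)
        (Matrix.of fun r s =>
          if (s : ℕ) = k - 1 then e r else if (r : ℕ) = (s : ℕ) + 1 then 1 else 0)
    ∀ η : ℂ,
      (η • (1 : Matrix (Fin m ⊕ Fin k) (Fin m ⊕ Fin k) ℂ) - B).det =
        (η • (1 : Matrix (Fin m) (Fin m) ℂ) - h).det *
            (η ^ k - ∑ j : Fin k, e j * η ^ (j : ℕ)) -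
          f ⬝ᵥ ((η • (1 : Matrix (Fin m) (Fin m) ℂ) - h).adjugate *ᵥ g) := by
  intro η
  exact aux_all m k hk h f g e η
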